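/- In the shuffle algebra ℚ⟨e_0,e_1⟩ with shuffle product ⧢, for every word w we have (1+e_0)^{-1} ⧢ w(e_0, e_1) = w((1+e_0)^{-1} e_0, (1+e_0)^{-1} e_1) · (1+e_0)^{-1}, as an identity in the completion ℚ⟨⟨e_0,e_1⟩⟩ (where (1+e_0)^{-1} = ∑_{n≥0} (-1)^n e_0^n). -/

import Mathlib

/-!
Both sides are determined by their constant coefficient and their left derivatives
`∂_c u = (s ↦ u (c :: s))`. The derivative `∂_c` is a derivation of the shuffle product,
satisfies `∂_c (u v) = u(∅) ∂_c v + (∂_c u) v` for concatenation, and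
`∂_c (1+e₀)⁻¹ = -[c = 0] (1+e₀)⁻¹`, `∂_c ((1+e₀)⁻¹ e_a) = [c = a] - [c = 0] (1+e₀)⁻¹ e_a`.
Consequently both `F w = (1+e₀)⁻¹ ⧢ w` and `F w = w((1+e₀)⁻¹e₀, (1+e₀)⁻¹e₁) (1+e₀)⁻¹` satisfy
`∂_c F(a w) = -[c = 0] F(a w) + [c = a] F w` and `∂_c F [] = -[c = 0] F []`, and have the same
constant coefficient, so induction on the length of the coefficient word finishes the proof.
-/

/-- The subword of `w` given by the positions in `S` (in increasing order). -/
def extract (w : List (Fin 2)) (S : Finset ℕ) : List (Fin 2) :=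
  ((List.zip (List.range w.length) w).filter (fun q => q.1 ∈ S)).map Prod.snd

/-- Shuffle product of noncommutative series over `ℚ`. -/
def shMul (u v : List (Fin 2) → ℚ) : List (Fin 2) → ℚ :=
  fun w => ∑ S ∈ (Finset.range w.length).powerset,
    u (extract w S) * v (extract w ((Finset.range w.length) \ S))

/-- Concatenation product of noncommutative series. -/
def convMul (u v : List (Fin 2) → ℚ) : List (Fin 2) → ℚ :=
  fun w => ∑ i ∈ Finset.range (w.length + 1), u (w.take i) * v (w.drop i)

/-- The unit series `1`. -/
def oneSeries : List (Fin 2) → ℚ := fun w => if w = [] then 1 else 0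

/-- The indicator series of a word `w`. -/
def delta (w : List (Fin 2)) : List (Fin 2) → ℚ := fun v => if v = w then 1 else 0

/-- The series `(1 + e₀)⁻¹ = ∑_{n≥0} (-1)ⁿ e₀ⁿ`. -/
def invOnePlusE0 : List (Fin 2) → ℚ :=
  fun w => if ∀ a ∈ w, a = (0 : Fin 2) then (-1 : ℚ) ^ w.length else 0

/-- The series `(1 + e₀)⁻¹ · e_a = ∑_{n≥0} (-1)ⁿ e₀ⁿ e_a` substituted for
the letter `a`. -/
def letterSub (a : Fin 2) : List (Fin 2) → ℚ :=
  fun v => if v ≠ [] ∧ v.getLast? = some a ∧ ∀ x ∈ v.dropLast, x = (0 : Fin 2)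
    then (-1 : ℚ) ^ (v.length - 1) else 0

/-- The substitution `w(e₀,e₁) ↦ w((1+e₀)⁻¹ e₀, (1+e₀)⁻¹ e₁)`
(concatenation of the substituted letters). -/
def subst (w : List (Fin 2)) : List (Fin 2) → ℚ :=
  (w.map letterSub).foldr convMul oneSeries

def leftDeriv (c : Fin 2) (u : List (Fin 2) → ℚ) : List (Fin 2) → ℚ := fun s => u (c :: s)

@[simp] lemma leftDeriv_apply (c : Fin 2) (u : List (Fin 2) → ℚ) (s : List (Fin 2)) :
    leftDeriv c u s = u (c :: s) := rfl

lemma shMul_apply_nil (u v : List (Fin 2) → ℚ) : shMul u v [] = u [] * v [] := by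
  simp [shMul, extract]

lemma shMul_smul_left (r : ℚ) (u v : List (Fin 2) → ℚ) : shMul (r • u) v = r • shMul u v := by
  funext t
  simp only [shMul, Pi.smul_apply, smul_eq_mul, Finset.mul_sum, mul_assoc]

lemma shMul_smul_right (r : ℚ) (u v : List (Fin 2) → ℚ) : shMul u (r • v) = r • shMul u v := by
  funext t
  simp only [shMul, Pi.smul_apply, smul_eq_mul, Finset.mul_sum, mul_left_comm]

lemma shMul_zero_right (u : List (Fin 2) → ℚ) : shMul u 0 = 0 := by
  funext t
  simp [shMul]

private def succEmb : ℕ ↪ ℕ := ⟨(· + 1), add_left_injective 1⟩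

@[simp] private lemma succEmb_apply (x : ℕ) : succEmb x = x + 1 := rfl

private lemma powerset_map_succEmb (A : Finset ℕ) :
    (A.map succEmb).powerset = A.powerset.image (Finset.map succEmb) := by
  ext T
  simp only [Finset.mem_powerset, Finset.mem_image, Finset.subset_map_iff]
  exact ⟨fun ⟨u, hu, h⟩ => ⟨u, hu, h.symm⟩, fun ⟨u, hu, h⟩ => ⟨u, hu, h.symm⟩⟩

private lemma insert_zero_map_succEmb_sdiff_map (n : ℕ) (S : Finset ℕ) :
    insert 0 ((Finset.range n).map succEmb) \ S.map succEmb =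
      insert 0 ((Finset.range n \ S).map succEmb) := by
  ext (_ | _) <;> simp

private lemma insert_zero_map_succEmb_sdiff_insert (n : ℕ) (S : Finset ℕ) :
    insert 0 ((Finset.range n).map succEmb) \ insert 0 (S.map succEmb) =
      (Finset.range n \ S).map succEmb := by
  ext (_ | _) <;> simp

private lemma zip_range_cons (c : Fin 2) (t : List (Fin 2)) :
    List.zip (List.range (c :: t).length) (c :: t) =
      (0, c) :: (List.zip (List.range t.length) t).map (Prod.map (· + 1) id) := by
  rw [List.length_cons, List.range_succ_eq_map, List.zip_cons_cons, List.zip_map_left]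

private lemma extract_cons_map_succEmb (c : Fin 2) (t : List (Fin 2)) (S : Finset ℕ) :
    extract (c :: t) (S.map succEmb) = extract t S := by
  simp only [extract, zip_range_cons, List.filter_cons, List.filter_map]
  simp [Function.comp_def]

private lemma extract_cons_insert_zero (c : Fin 2) (t : List (Fin 2)) (S : Finset ℕ) :
    extract (c :: t) (insert 0 (S.map succEmb)) = c :: extract t S := by
  simp only [extract, zip_range_cons, List.filter_cons, List.filter_map]
  simp [Function.comp_def]

-- Split the sets of positions of `c :: t` according to whether they contain `0`.
lemma leftDeriv_shMul (c : Fin 2) (u v : List (Fin 2) → ℚ) :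
    leftDeriv c (shMul u v) = shMul (leftDeriv c u) v + shMul u (leftDeriv c v) := by
  funext t
  simp only [leftDeriv_apply, Pi.add_apply, shMul, List.length_cons]
  rw [Finset.range_add_one', Finset.sum_powerset_insert (by simp), ← succEmb.eq_def,
    powerset_map_succEmb, Finset.sum_image (fun _ _ _ _ h => Finset.map_injective succEmb h),
    Finset.sum_image (fun _ _ _ _ h => Finset.map_injective succEmb h), add_comm]
  congr 1 <;> refine Finset.sum_congr rfl fun S _ => ?_
  · rw [insert_zero_map_succEmb_sdiff_insert, extract_cons_insert_zero, extract_cons_map_succEmb]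
  · rw [insert_zero_map_succEmb_sdiff_map, extract_cons_map_succEmb, extract_cons_insert_zero]

lemma convMul_apply_nil (u v : List (Fin 2) → ℚ) : convMul u v [] = u [] * v [] := by
  simp [convMul]

lemma convMul_add_left (u₁ u₂ v : List (Fin 2) → ℚ) :
    convMul (u₁ + u₂) v = convMul u₁ v + convMul u₂ v := by
  funext t
  simp only [convMul, Pi.add_apply, add_mul, Finset.sum_add_distrib]

lemma convMul_smul_left (r : ℚ) (u v : List (Fin 2) → ℚ) :
    convMul (r • u) v = r • convMul u v := by
  funext t
  simp only [convMul, Pi.smul_apply, smul_eq_mul, Finset.mul_sum, mul_assoc]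

lemma oneSeries_convMul (u : List (Fin 2) → ℚ) : convMul oneSeries u = u := by
  funext t
  rw [convMul, Finset.sum_eq_single 0 (fun i hi hi0 => ?_) (by simp)]
  · simp [oneSeries]
  · have : t.take i ≠ [] := by
      simp only [ne_eq, List.take_eq_nil_iff, not_or]
      exact ⟨hi0, by rintro rfl; simp_all⟩
    simp [oneSeries, this]

lemma leftDeriv_convMul (c : Fin 2) (u v : List (Fin 2) → ℚ) :
    leftDeriv c (convMul u v) = u [] • leftDeriv c v + convMul (leftDeriv c u) v := by
  funext t
  simp only [convMul, leftDeriv_apply, Pi.add_apply, Pi.smul_apply, smul_eq_mul, List.length_cons]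
  rw [Finset.sum_range_succ', add_comm]
  simp

lemma leftDeriv_invOnePlusE0 (c : Fin 2) :
    leftDeriv c invOnePlusE0 = (if c = 0 then -1 else 0 : ℚ) • invOnePlusE0 := by
  funext s
  by_cases hc : c = 0 <;> by_cases hs : ∀ a ∈ s, a = 0 <;> simp [invOnePlusE0, hc, hs, pow_succ]

lemma leftDeriv_delta_nil (c : Fin 2) : leftDeriv c (delta []) = 0 := by
  funext s
  simp [delta]

lemma leftDeriv_delta_cons (c a : Fin 2) (w : List (Fin 2)) :
    leftDeriv c (delta (a :: w)) = (if c = a then 1 else 0 : ℚ) • delta w := by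
  funext s
  by_cases hc : c = a <;> simp [delta, hc]

lemma leftDeriv_letterSub (c a : Fin 2) :
    leftDeriv c (letterSub a) =
      (if c = a then 1 else 0 : ℚ) • oneSeries + (if c = 0 then -1 else 0 : ℚ) • letterSub a := by
  funext s
  simp only [leftDeriv_apply, Pi.add_apply, Pi.smul_apply, smul_eq_mul]
  rcases s with _ | ⟨d, s⟩
  · by_cases hc : c = a <;> simp [letterSub, oneSeries, hc]
  · by_cases hc : c = 0 <;> simp [letterSub, oneSeries, hc, pow_succ]

lemma subst_apply_nil (w : List (Fin 2)) : subst w [] = if w = [] then 1 else 0 := by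
  rcases w with _ | ⟨a, w⟩
  · simp [subst, oneSeries]
  · simp [subst, convMul_apply_nil, letterSub]

lemma leftDeriv_subst_cons (c a : Fin 2) (w : List (Fin 2)) :
    leftDeriv c (subst (a :: w)) =
      (if c = a then 1 else 0 : ℚ) • subst w + (if c = 0 then -1 else 0 : ℚ) • subst (a :: w) := by
  change leftDeriv c (convMul (letterSub a) (subst w)) = _
  rw [leftDeriv_convMul, leftDeriv_letterSub, convMul_add_left, convMul_smul_left,
    convMul_smul_left, oneSeries_convMul, show letterSub a [] = 0 by simp [letterSub], zero_smul,
    zero_add]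
  rfl

lemma leftDeriv_shMul_delta_nil (c : Fin 2) :
    leftDeriv c (shMul invOnePlusE0 (delta [])) =
      (if c = 0 then -1 else 0 : ℚ) • shMul invOnePlusE0 (delta []) := by
  rw [leftDeriv_shMul, leftDeriv_invOnePlusE0, leftDeriv_delta_nil, shMul_smul_left,
    shMul_zero_right, add_zero]

lemma leftDeriv_shMul_delta_cons (c a : Fin 2) (w : List (Fin 2)) :
    leftDeriv c (shMul invOnePlusE0 (delta (a :: w))) =
      (if c = 0 then -1 else 0 : ℚ) • shMul invOnePlusE0 (delta (a :: w)) +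
        (if c = a then 1 else 0 : ℚ) • shMul invOnePlusE0 (delta w) := by
  rw [leftDeriv_shMul, leftDeriv_invOnePlusE0, leftDeriv_delta_cons, shMul_smul_left,
    shMul_smul_right]

lemma leftDeriv_convMul_subst_nil (c : Fin 2) :
    leftDeriv c (convMul (subst []) invOnePlusE0) =
      (if c = 0 then -1 else 0 : ℚ) • convMul (subst []) invOnePlusE0 := by
  have h : convMul (subst []) invOnePlusE0 = invOnePlusE0 := oneSeries_convMul _
  rw [h, leftDeriv_invOnePlusE0]

lemma leftDeriv_convMul_subst_cons (c a : Fin 2) (w : List (Fin 2)) :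
    leftDeriv c (convMul (subst (a :: w)) invOnePlusE0) =
      (if c = 0 then -1 else 0 : ℚ) • convMul (subst (a :: w)) invOnePlusE0 +
        (if c = a then 1 else 0 : ℚ) • convMul (subst w) invOnePlusE0 := by
  rw [leftDeriv_convMul, leftDeriv_subst_cons, subst_apply_nil, if_neg (List.cons_ne_nil a w),
    zero_smul, zero_add, convMul_add_left, convMul_smul_left, convMul_smul_left, add_comm]

/-- For every word `w`:
`(1+e₀)⁻¹ ⧢ w(e₀,e₁) = w((1+e₀)⁻¹e₀, (1+e₀)⁻¹e₁) · (1+e₀)⁻¹`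
in `ℚ⟨⟨e₀,e₁⟩⟩`. -/
theorem stmt_9 (w : List (Fin 2)) :
    shMul invOnePlusE0 (delta w) = convMul (subst w) invOnePlusE0 := by
  funext v
  induction v generalizing w with
  | nil =>
    rw [shMul_apply_nil, convMul_apply_nil, subst_apply_nil]
    rcases w with _ | ⟨a, w⟩ <;> simp [invOnePlusE0, delta]
  | cons c t ih =>
    change leftDeriv c (shMul invOnePlusE0 (delta w)) t =
      leftDeriv c (convMul (subst w) invOnePlusE0) t
    rcases w with _ | ⟨a, w⟩
    · rw [leftDeriv_shMul_delta_nil, leftDeriv_convMul_subst_nil]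
      simp only [Pi.smul_apply, ih]
    · rw [leftDeriv_shMul_delta_cons, leftDeriv_convMul_subst_cons]
      simp only [Pi.add_apply, Pi.smul_apply, ih]
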